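/- (Existence and uniqueness for the simplified equation with ω = 0.) Fix real constants R₁, R₂ with 0 < R₁ < R₂, set L = log(R₂/R₁) and I = [0, L], fix α > 0 and 0 < M₁ < M₂. Then there exists exactly one C² function u : I → ℝ with u(y) > 0 on I satisfying (e^{−2y}u′(y))′ = 2e^{−2y}((α − 1)e^{−4u(y)} + (α/2)(e^{2u(y)} − 3e^{−2u(y)}) + 1) for all y ∈ (0, L), together with the boundary conditions u(0) = M₁ and u(L) = M₂. -/

import Mathlib

/-!
With the flux `w = e^{-2y} u'` the equation becomes the system `u' = e^{2y} w`,
`w' = 2 e^{-2y} f(u)`, where `f = frankNonlinearity α` vanishes at `0` and is strictly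
increasing on `[0, ∞)`.

Uniqueness is a maximum principle: at a positive interior maximum of `u₁ - u₂` the flux
difference vanishes, and it then increases because `f(u₁) > f(u₂)` nearby, so `u₁ - u₂` keeps
increasing.

Existence is by shooting on `w(0)`, after clamping `u` to `[0, M₂]` and `w` to a large interval so
that the field is bounded and globally Lipschitz. Along every trajectory `w' ≥ 0`, so `u` first
decreases and then increases and never exceeds its boundary values; an interior minimum with
`u ≤ 0` would be a stationary point of the flow, which the trajectory could not leave. Hence on
the trajectory hitting `u(L) = M₂`, given by the intermediate value theorem, no clamp is active.
-/

/-- A classical solution of the simplified (`ω = 0`) boundary value problem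
`(e^{−2y}u′(y))′ = 2e^{−2y}((α − 1)e^{−4u} + (α/2)(e^{2u} − 3e^{−2u}) + 1)`
on `(0, L)` with `u(0) = M₁`, `u(L) = M₂`: a C² function on `I = [0, L]`,
positive on `I`. -/
def IsSimplifiedSolution (α M₁ M₂ L : ℝ) (u : ℝ → ℝ) : Prop :=
  ContDiffOn ℝ 2 u (Set.Icc 0 L) ∧
  (∀ y ∈ Set.Icc (0 : ℝ) L, 0 < u y) ∧
  (∀ y ∈ Set.Ioo (0 : ℝ) L,
    deriv (fun t => Real.exp (-2 * t) * deriv u t) y =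
      2 * Real.exp (-2 * y) *
        ((α - 1) * Real.exp (-4 * u y) +
          (α / 2) * (Real.exp (2 * u y) - 3 * Real.exp (-2 * u y)) + 1)) ∧
  u 0 = M₁ ∧ u L = M₂

open Set Real Filter Topology
open scoped NNReal

noncomputable def frankNonlinearity (α x : ℝ) : ℝ :=
  (α - 1) * exp (-4 * x) + α / 2 * (exp (2 * x) - 3 * exp (-2 * x)) + 1

lemma frankNonlinearity_zero (α : ℝ) : frankNonlinearity α 0 = 0 := by
  simp only [frankNonlinearity, mul_zero, exp_zero]
  ring

namespace frankNonlinearity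

variable {α : ℝ}

lemma hasDerivAt (α x : ℝ) :
    HasDerivAt (frankNonlinearity α)
      (-4 * (α - 1) * exp (-4 * x) + α * exp (2 * x) + 3 * α * exp (-2 * x)) x := by
  have hexp (c : ℝ) : HasDerivAt (fun x => exp (c * x)) (c * exp (c * x)) x := by
    simpa [mul_comm] using ((hasDerivAt_id x).const_mul c).exp
  have := (((hexp (-4)).const_mul (α - 1)).add
    (((hexp 2).sub ((hexp (-2)).const_mul 3)).const_mul (α / 2))).add_const 1
  exact this.congr_deriv (by ring)

lemma contDiff (α : ℝ) : ContDiff ℝ ⊤ (frankNonlinearity α) := by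
  unfold frankNonlinearity
  fun_prop

lemma strictMonoOn (hα : 0 < α) : StrictMonoOn (frankNonlinearity α) (Ici 0) := by
  refine strictMonoOn_of_hasDerivWithinAt_pos (convex_Ici 0)
    (contDiff α).continuous.continuousOn (fun x _ => (hasDerivAt α x).hasDerivWithinAt) ?_
  intro x hx
  rw [interior_Ici] at hx
  -- with `a = e^{-2x} ≤ 1 ≤ e^{2x}`, the derivative is `4a² + α (e^{2x} - a² + 3 (a - a²))`
  have ha : exp (-2 * x) ≤ 1 := exp_le_one_iff.2 (by linarith [mem_Ioi.1 hx])
  have hE : 1 ≤ exp (2 * x) := one_le_exp (by linarith [mem_Ioi.1 hx])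
  have ha0 := exp_pos (-2 * x)
  have hsq : exp (-4 * x) = exp (-2 * x) ^ 2 := by rw [← exp_nat_mul]; ring_nf
  rw [hsq]
  have hsq1 : exp (-2 * x) ^ 2 ≤ 1 := pow_le_one₀ ha0.le ha
  nlinarith [mul_nonneg hα.le (sub_nonneg.2 (hsq1.trans hE)),
    mul_nonneg hα.le (mul_nonneg ha0.le (sub_nonneg.2 ha))]

lemma nonneg (hα : 0 < α) {x : ℝ} (hx : 0 ≤ x) : 0 ≤ frankNonlinearity α x := by
  simpa [frankNonlinearity_zero] using (strictMonoOn hα).monotoneOn self_mem_Ici hx hx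

end frankNonlinearity

section RealDeriv

variable {f f' : ℝ → ℝ} {a b : ℝ}

lemma monotoneOn_of_hasDerivWithinAt_Icc_nonneg
    (hf : ∀ t ∈ Icc a b, HasDerivWithinAt f (f' t) (Icc a b) t) (hf' : ∀ t ∈ Ioo a b, 0 ≤ f' t) :
    MonotoneOn f (Icc a b) :=
  monotoneOn_of_hasDerivWithinAt_nonneg (convex_Icc a b)
    (fun t ht => (hf t ht).continuousWithinAt)
    (fun t ht => (hf t (interior_subset ht)).mono interior_subset)
    (fun t ht => hf' t (by rwa [interior_Icc] at ht))

lemma mul_sub_le_sub_of_hasDerivWithinAt_Icc {C : ℝ} (hab : a ≤ b)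
    (hf : ∀ t ∈ Icc a b, HasDerivWithinAt f (f' t) (Icc a b) t) (hf' : ∀ t ∈ Ioo a b, C ≤ f' t) :
    C * (b - a) ≤ f b - f a := by
  have := monotoneOn_of_hasDerivWithinAt_Icc_nonneg (f := fun t => f t - C * t)
    (fun t ht => (hf t ht).sub ((hasDerivWithinAt_id t _).const_mul C))
    (fun t ht => by simpa using hf' t ht) (left_mem_Icc.2 hab) (right_mem_Icc.2 hab) hab
  linarith

lemma le_max_of_hasDerivWithinAt_Icc
    (hf : ∀ t ∈ Icc a b, HasDerivWithinAt f (f' t) (Icc a b) t)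
    (hsign : ∀ s ∈ Icc a b, ∀ t ∈ Icc a b, s ≤ t → 0 ≤ f' s → 0 ≤ f' t) :
    ∀ t ∈ Icc a b, f t ≤ max (f a) (f b) := by
  intro t ht
  by_cases hft : 0 ≤ f' t
  · have hmono : MonotoneOn f (Icc t b) :=
      monotoneOn_of_hasDerivWithinAt_Icc_nonneg
        (fun s hs => (hf s ⟨ht.1.trans hs.1, hs.2⟩).mono (Icc_subset_Icc_left ht.1))
        (fun s hs => hsign t ht s ⟨ht.1.trans hs.1.le, hs.2.le⟩ hs.1.le hft)
    exact le_max_of_le_right (hmono (left_mem_Icc.2 ht.2) (right_mem_Icc.2 ht.2) ht.2)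
  · have hanti : MonotoneOn (fun s => -f s) (Icc a t) :=
      monotoneOn_of_hasDerivWithinAt_Icc_nonneg
        (fun s hs => (hf s ⟨hs.1, hs.2.trans ht.2⟩).neg.mono (Icc_subset_Icc_right ht.2))
        (fun s hs => neg_nonneg.2 (le_of_not_ge fun hs' =>
          hft (hsign s ⟨hs.1.le, hs.2.le.trans ht.2⟩ t ht hs.2.le hs')))
    exact le_max_of_le_left (neg_le_neg_iff.1
      (hanti (left_mem_Icc.2 ht.1) (right_mem_Icc.2 ht.1) ht.1))

lemma contDiffOn_succ_of_hasDerivWithinAt {s : Set ℝ} (hs : UniqueDiffOn ℝ s) {n : ℕ}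
    (hf : ∀ t ∈ s, HasDerivWithinAt f (f' t) s t) (hf' : ContDiffOn ℝ n f' s) :
    ContDiffOn ℝ (n + 1) f s := by
  rw [contDiffOn_succ_iff_derivWithin hs]
  refine ⟨fun t ht => (hf t ht).differentiableWithinAt, by simp, ?_⟩
  exact hf'.congr fun t ht => (hf t ht).derivWithin (hs t ht)

end RealDeriv

section ODE

variable {E : Type*} [NormedAddCommGroup E] [NormedSpace ℝ E] {v : ℝ → E → E} {a b : ℝ}
  {K : ℝ≥0}

lemma HasDerivWithinAt.Ici_of_Icc {γ : ℝ → E} {γ' : E} {t : ℝ}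
    (h : HasDerivWithinAt γ γ' (Icc a b) t) (ht : t ∈ Ico a b) :
    HasDerivWithinAt γ γ' (Ici t) t :=
  h.mono_of_mem_nhdsWithin (Icc_mem_nhdsGE_of_mem ht)

lemma exists_forall_hasDerivWithinAt_Icc_of_lipschitzWith [CompleteSpace E] {C : ℝ}
    (hab : a ≤ b) (hv : ∀ t ∈ Icc a b, LipschitzWith K (v t))
    (hcont : ∀ x, ContinuousOn (v · x) (Icc a b)) (hbound : ∀ t ∈ Icc a b, ∀ x, ‖v t x‖ ≤ C)
    (x₀ : E) :
    ∃ γ : ℝ → E, γ a = x₀ ∧ ∀ t ∈ Icc a b, HasDerivWithinAt γ (v t (γ t)) (Icc a b) t := by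
  have hC : 0 ≤ C := (norm_nonneg _).trans (hbound a (left_mem_Icc.2 hab) x₀)
  -- a ball of radius `C (b - a)` is never left, so the global bounds are all that matter
  have hpl : IsPicardLindelof v (tmin := a) (tmax := b) ⟨a, left_mem_Icc.2 hab⟩ x₀
      ⟨C * (b - a), mul_nonneg hC (sub_nonneg.2 hab)⟩ 0 ⟨C, hC⟩ K :=
    { lipschitzOnWith := fun t ht => (hv t ht).lipschitzOnWith
      continuousOn := fun x _ => hcont x
      norm_le := fun t ht x _ => hbound t ht x
      mul_max_le := by simp [max_eq_left (sub_nonneg.2 hab)]; rfl }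
  exact hpl.exists_eq_forall_mem_Icc_hasDerivWithinAt₀

lemma LipschitzWith.endpoint_of_forall_hasDerivWithinAt_Icc {X : Type*} [PseudoMetricSpace X]
    {γ : X → ℝ → E} {K₀ : ℝ≥0} (hab : a ≤ b) (hv : ∀ t ∈ Ico a b, LipschitzWith K (v t))
    (hγ : ∀ x, ∀ t ∈ Icc a b, HasDerivWithinAt (γ x) (v t (γ x t)) (Icc a b) t)
    (h₀ : LipschitzWith K₀ fun x => γ x a) :
    LipschitzWith (K₀ * Real.toNNReal (exp (K * (b - a)))) fun x => γ x b := by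
  refine LipschitzWith.of_dist_le_mul fun x y => ?_
  have := dist_le_of_trajectories_ODE_of_mem (s := fun _ => univ)
    (fun t ht => (hv t ht).lipschitzOnWith) (fun t ht => (hγ x t ht).continuousWithinAt)
    (fun t ht => (hγ x t (Ico_subset_Icc_self ht)).Ici_of_Icc ht) (fun _ _ => trivial)
    (fun t ht => (hγ y t ht).continuousWithinAt)
    (fun t ht => (hγ y t (Ico_subset_Icc_self ht)).Ici_of_Icc ht) (fun _ _ => trivial)
    le_rfl b (right_mem_Icc.2 hab)
  rw [NNReal.coe_mul, Real.coe_toNNReal _ (exp_pos _).le]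
  nlinarith [h₀.dist_le_mul x y, exp_pos (K * (b - a))]

lemma eqOn_const_of_forall_hasDerivWithinAt_Icc {γ : ℝ → E} {x₀ : E}
    (hv : ∀ t ∈ Ico a b, LipschitzWith K (v t)) (hx₀ : ∀ t ∈ Ico a b, v t x₀ = 0)
    (hγ : ∀ t ∈ Icc a b, HasDerivWithinAt γ (v t (γ t)) (Icc a b) t) (ha : γ a = x₀) :
    EqOn γ (fun _ => x₀) (Icc a b) :=
  ODE_solution_unique_of_mem_Icc_right (s := fun _ => univ)
    (fun t ht => (hv t ht).lipschitzOnWith) (fun t ht => (hγ t ht).continuousWithinAt)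
    (fun t ht => (hγ t (Ico_subset_Icc_self ht)).Ici_of_Icc ht) (fun _ _ => trivial)
    continuousOn_const (fun t ht => by simpa [hx₀ t ht] using hasDerivWithinAt_const t _ x₀)
    (fun _ _ => trivial) ha

end ODE

noncomputable def clampedNonlinearity (α M x : ℝ) : ℝ :=
  frankNonlinearity α (max 0 (min M x))

namespace clampedNonlinearity

variable {α M : ℝ}

lemma clamp_mem_Icc (hM : 0 ≤ M) (x : ℝ) : max 0 (min M x) ∈ Icc 0 M :=
  ⟨le_max_left _ _, max_le hM (min_le_left _ _)⟩

lemma mem_Icc (hα : 0 < α) (hM : 0 ≤ M) (x : ℝ) :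
    clampedNonlinearity α M x ∈ Icc 0 (frankNonlinearity α M) := by
  have hx := clamp_mem_Icc hM x
  exact ⟨frankNonlinearity.nonneg hα hx.1,
    (frankNonlinearity.strictMonoOn hα).monotoneOn hx.1 (mem_Ici.2 hM) hx.2⟩

lemma eq_zero_of_nonpos {x : ℝ} (hx : x ≤ 0) : clampedNonlinearity α M x = 0 := by
  rw [clampedNonlinearity, max_eq_left ((min_le_right M x).trans hx),
    frankNonlinearity_zero]

lemma eq_of_mem {x : ℝ} (hx : x ∈ Icc 0 M) :
    clampedNonlinearity α M x = frankNonlinearity α x := by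
  rw [clampedNonlinearity, min_eq_right hx.2, max_eq_right hx.1]

lemma exists_lipschitzWith (α : ℝ) (hM : 0 ≤ M) :
    ∃ K, LipschitzWith K (clampedNonlinearity α M) := by
  obtain ⟨K, hK⟩ := ContDiffOn.exists_lipschitzOnWith
    ((frankNonlinearity.contDiff α).contDiffOn (s := Icc 0 M)) (by simp) (convex_Icc 0 M)
    isCompact_Icc
  have hclamp : LipschitzWith 1 fun x : ℝ => max 0 (min M x) :=
    (LipschitzWith.id.const_min M).const_max 0
  exact ⟨K * 1, lipschitzOnWith_univ.1
    (hK.comp hclamp.lipschitzOnWith fun x _ => clamp_mem_Icc hM x)⟩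

end clampedNonlinearity

/-- The equation as the system `u' = e^{2t} w`, `w' = 2 e^{-2t} f(u)` for the flux
`w = e^{-2t} u'`, with `w` clamped to `[-W, W]` and `u` to `[0, M]`. -/
noncomputable def shootingField (α M W t : ℝ) (x : ℝ × ℝ) : ℝ × ℝ :=
  (exp (2 * t) * max (-W) (min W x.2), 2 * exp (-2 * t) * clampedNonlinearity α M x.1)

namespace shootingField

variable {α M W L : ℝ}

lemma exists_lipschitzWith (hM : 0 ≤ M) :
    ∃ K, ∀ t ∈ Icc 0 L, LipschitzWith K (shootingField α M W t) := by
  obtain ⟨K, hK⟩ := clampedNonlinearity.exists_lipschitzWith α hM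
  refine ⟨Real.toNNReal (exp (2 * L) + 2 * K), fun t ht => LipschitzWith.of_dist_le_mul ?_⟩
  intro x y
  have hclamp : LipschitzWith 1 fun x : ℝ => max (-W) (min W x) :=
    (LipschitzWith.id.const_min W).const_max (-W)
  have h₁ := hclamp.dist_le_mul x.2 y.2
  have h₂ := hK.dist_le_mul x.1 y.1
  have hx₁ : dist x.1 y.1 ≤ dist x y := le_max_left _ _
  have hx₂ : dist x.2 y.2 ≤ dist x y := le_max_right _ _
  have he₁ : exp (2 * t) ≤ exp (2 * L) := exp_le_exp.2 (by linarith [ht.2])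
  have he₂ : exp (-2 * t) ≤ 1 := exp_le_one_iff.2 (by linarith [ht.1])
  rw [Real.coe_toNNReal _ (by positivity), Prod.dist_eq]
  simp only [shootingField, Real.dist_eq, NNReal.coe_one, one_mul] at h₁ h₂ hx₁ hx₂ ⊢
  rw [← mul_sub, ← mul_sub, abs_mul, abs_mul, abs_of_pos (exp_pos _),
    abs_of_pos (by positivity : (0 : ℝ) < 2 * exp (-2 * t))]
  have hd := dist_nonneg (x := x) (y := y)
  have hK0 := K.2
  refine max_le ?_ ?_
  · calc exp (2 * t) * |max (-W) (min W x.2) - max (-W) (min W y.2)|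
        ≤ exp (2 * L) * dist x y := mul_le_mul he₁ (h₁.trans hx₂) (abs_nonneg _) (exp_pos _).le
      _ ≤ (exp (2 * L) + 2 * K) * dist x y := by nlinarith
  · calc 2 * exp (-2 * t) * |clampedNonlinearity α M x.1 - clampedNonlinearity α M y.1|
        ≤ 2 * 1 * (K * dist x y) := by
          gcongr
          exact h₂.trans (mul_le_mul_of_nonneg_left hx₁ hK0)
      _ ≤ (exp (2 * L) + 2 * K) * dist x y := by nlinarith [exp_pos (2 * L)]

lemma norm_le (hα : 0 < α) (hM : 0 ≤ M) (hW : 0 ≤ W) {t : ℝ} (ht : t ∈ Icc 0 L) (x : ℝ × ℝ) :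
    ‖shootingField α M W t x‖ ≤ exp (2 * L) * W + 2 * frankNonlinearity α M := by
  have hg := clampedNonlinearity.mem_Icc hα hM x.1
  have hw : |max (-W) (min W x.2)| ≤ W :=
    abs_le.2 ⟨le_max_left _ _, max_le (by linarith) (min_le_left _ _)⟩
  have he₁ : exp (2 * t) ≤ exp (2 * L) := exp_le_exp.2 (by linarith [ht.2])
  have he₂ : exp (-2 * t) ≤ 1 := exp_le_one_iff.2 (by linarith [ht.1])
  rw [Prod.norm_def]
  simp only [shootingField, Real.norm_eq_abs, abs_mul, abs_of_pos (exp_pos _), abs_two,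
    abs_of_nonneg hg.1]
  have hfM : 0 ≤ frankNonlinearity α M := frankNonlinearity.nonneg hα hM
  refine max_le ?_ ?_
  · calc exp (2 * t) * |max (-W) (min W x.2)| ≤ exp (2 * L) * W := by gcongr
      _ ≤ _ := by linarith
  · calc 2 * exp (-2 * t) * clampedNonlinearity α M x.1 ≤ 2 * 1 * frankNonlinearity α M := by
          gcongr
          exacts [hg.1, hg.2]
      _ ≤ _ := by nlinarith [exp_pos (2 * L)]

lemma continuous_time (α M W : ℝ) (x : ℝ × ℝ) : Continuous (shootingField α M W · x) := by
  unfold shootingField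
  fun_prop

end shootingField

def IsShootingTrajectory (α M W L : ℝ) (γ : ℝ → ℝ × ℝ) : Prop :=
  ∀ t ∈ Icc 0 L, HasDerivWithinAt γ (shootingField α M W t (γ t)) (Icc 0 L) t

namespace IsShootingTrajectory

variable {α M W L : ℝ} {γ : ℝ → ℝ × ℝ}

lemma hasDerivWithinAt_fst (hγ : IsShootingTrajectory α M W L γ) :
    ∀ t ∈ Icc 0 L, HasDerivWithinAt (fun t => (γ t).1)
      (exp (2 * t) * max (-W) (min W (γ t).2)) (Icc 0 L) t :=
  fun t ht => (hasFDerivAt_fst (𝕜 := ℝ) (p := γ t)).comp_hasDerivWithinAt t (hγ t ht)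

lemma hasDerivWithinAt_snd (hγ : IsShootingTrajectory α M W L γ) :
    ∀ t ∈ Icc 0 L, HasDerivWithinAt (fun t => (γ t).2)
      (2 * exp (-2 * t) * clampedNonlinearity α M (γ t).1) (Icc 0 L) t :=
  fun t ht => (hasFDerivAt_snd (𝕜 := ℝ) (p := γ t)).comp_hasDerivWithinAt t (hγ t ht)

lemma monotoneOn_snd (hγ : IsShootingTrajectory α M W L γ) (hα : 0 < α) (hM : 0 ≤ M) :
    MonotoneOn (fun t => (γ t).2) (Icc 0 L) :=
  monotoneOn_of_hasDerivWithinAt_Icc_nonneg hγ.hasDerivWithinAt_snd fun t _ =>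
    mul_nonneg (by positivity) (clampedNonlinearity.mem_Icc hα hM _).1

lemma abs_snd_sub_le (hγ : IsShootingTrajectory α M W L γ) (hα : 0 < α) (hM : 0 ≤ M) :
    ∀ t ∈ Icc 0 L, |(γ t).2 - (γ 0).2| ≤ 2 * frankNonlinearity α M * L := by
  intro t ht
  refine (norm_image_sub_le_of_norm_deriv_le_segment' (C := 2 * frankNonlinearity α M)
    hγ.hasDerivWithinAt_snd (fun s hs => ?_) t ht).trans ?_
  · have hg := clampedNonlinearity.mem_Icc hα hM (γ s).1
    have hs : exp (-2 * s) ≤ 1 := exp_le_one_iff.2 (by linarith [hs.1])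
    rw [Real.norm_eq_abs, abs_of_nonneg (mul_nonneg (by positivity) hg.1)]
    calc 2 * exp (-2 * s) * clampedNonlinearity α M (γ s).1
        ≤ 2 * 1 * frankNonlinearity α M := by gcongr; exacts [hg.1, hg.2]
      _ = 2 * frankNonlinearity α M := by ring
  · have := frankNonlinearity.nonneg hα hM
    rw [sub_zero]
    gcongr
    exact ht.2

lemma fst_le_max (hγ : IsShootingTrajectory α M W L γ) (hα : 0 < α) (hM : 0 ≤ M) :
    ∀ t ∈ Icc 0 L, (γ t).1 ≤ max (γ 0).1 (γ L).1 := by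
  refine le_max_of_hasDerivWithinAt_Icc hγ.hasDerivWithinAt_fst fun s hs t ht hst h => ?_
  have hclamp : Monotone fun x : ℝ => max (-W) (min W x) :=
    fun x y hxy => max_le_max le_rfl (min_le_min le_rfl hxy)
  have := ((mul_nonneg_iff_of_pos_left (exp_pos (2 * s))).1 h).trans
    (hclamp (hγ.monotoneOn_snd hα hM hs ht hst))
  exact mul_nonneg (exp_pos _).le this

lemma fst_pos (hγ : IsShootingTrajectory α M W L γ) (hM : 0 ≤ M) (hW : 0 < W)
    (h₀ : 0 < (γ 0).1) (h_L : 0 < (γ L).1) : ∀ t ∈ Icc 0 L, 0 < (γ t).1 := by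
  by_contra! ⟨t, ht, hle⟩
  obtain ⟨y, hy, hmin⟩ := isCompact_Icc.exists_isMinOn ⟨t, ht⟩
    fun t ht => (hγ.hasDerivWithinAt_fst t ht).continuousWithinAt
  have hy₀ : (γ y).1 ≤ 0 := (hmin ht).trans hle
  have hyI : Icc 0 L ∈ 𝓝 y := Icc_mem_nhds (lt_of_le_of_ne hy.1 (by rintro rfl; linarith))
    (lt_of_le_of_ne hy.2 (by rintro rfl; linarith))
  have hcrit := (hmin.isLocalMin hyI).hasDerivAt_eq_zero
    ((hγ.hasDerivWithinAt_fst y hy).hasDerivAt hyI)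
  have hw : (γ y).2 = 0 := by
    have hc := (mul_eq_zero.1 hcrit).resolve_left (exp_pos _).ne'
    rcases max_cases (-W) (min W (γ y).2) with h | h <;>
    rcases min_cases W (γ y).2 with h' | h' <;> linarith
  -- `(u, w) = (u y, 0)` is a stationary point, so the trajectory stays there
  have hstat : ∀ t ∈ Ico y L, shootingField α M W t (γ y) = 0 := fun t _ => by
    simp [shootingField, hw, clampedNonlinearity.eq_zero_of_nonpos hy₀, hW.le]
  obtain ⟨K, hK⟩ := shootingField.exists_lipschitzWith (α := α) (W := W) (L := L) hM
  have hconst := eqOn_const_of_forall_hasDerivWithinAt_Icc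
    (fun t ht => hK t ⟨hy.1.trans ht.1, ht.2.le⟩) hstat
    (fun t ht => (hγ t ⟨hy.1.trans ht.1, ht.2⟩).mono (Icc_subset_Icc_left hy.1)) rfl
    (right_mem_Icc.2 hy.2)
  have := congrArg Prod.fst hconst
  simp only at this
  linarith

lemma fst_le_of_snd_nonpos (hγ : IsShootingTrajectory α M W L γ) (hW : 0 ≤ W) (hL : 0 ≤ L)
    (h : ∀ t ∈ Icc 0 L, (γ t).2 ≤ 0) : (γ L).1 ≤ (γ 0).1 := by
  have := mul_sub_le_sub_of_hasDerivWithinAt_Icc (C := 0) hL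
    (fun t ht => (hγ.hasDerivWithinAt_fst t ht).neg) fun t ht => by
      have : max (-W) (min W (γ t).2) ≤ 0 :=
        max_le (by linarith) ((min_le_right _ _).trans (h t (Ioo_subset_Icc_self ht)))
      nlinarith [exp_pos (2 * t)]
  simp only [Pi.neg_apply] at this
  linarith

lemma add_mul_le_fst_of_le_snd (hγ : IsShootingTrajectory α M W L γ) {c : ℝ} (hc : 0 ≤ c)
    (hcW : c ≤ W) (hL : 0 ≤ L) (h : ∀ t ∈ Icc 0 L, c ≤ (γ t).2) :
    (γ 0).1 + c * L ≤ (γ L).1 := by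
  have := mul_sub_le_sub_of_hasDerivWithinAt_Icc (C := c) hL hγ.hasDerivWithinAt_fst fun t ht => by
    have : c ≤ max (-W) (min W (γ t).2) :=
      le_max_of_le_right (le_min hcW (h t (Ioo_subset_Icc_self ht)))
    have : 1 ≤ exp (2 * t) := one_le_exp (by linarith [ht.1])
    nlinarith
  linarith

end IsShootingTrajectory

section Existence

variable {α M₁ M₂ L : ℝ}

lemma isSimplifiedSolution_of_hasDerivWithinAt {u w : ℝ → ℝ} (hL : 0 < L)
    (hu : ∀ t ∈ Icc 0 L, HasDerivWithinAt u (exp (2 * t) * w t) (Icc 0 L) t)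
    (hw : ∀ t ∈ Icc 0 L,
      HasDerivWithinAt w (2 * exp (-2 * t) * frankNonlinearity α (u t)) (Icc 0 L) t)
    (hpos : ∀ t ∈ Icc 0 L, 0 < u t) (h₀ : u 0 = M₁) (h_L : u L = M₂) :
    IsSimplifiedSolution α M₁ M₂ L u := by
  have hI : UniqueDiffOn ℝ (Icc 0 L) := uniqueDiffOn_Icc hL
  have hucont : ContinuousOn u (Icc 0 L) := fun t ht => (hu t ht).continuousWithinAt
  have hwC1 : ContDiffOn ℝ (0 + 1) w (Icc 0 L) :=
    contDiffOn_succ_of_hasDerivWithinAt hI hw <| contDiffOn_zero.2 <|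
      (continuous_const.mul (by fun_prop)).continuousOn.mul
        ((frankNonlinearity.contDiff α).continuous.comp_continuousOn hucont)
  have huC2 : ContDiffOn ℝ (1 + 1) u (Icc 0 L) :=
    contDiffOn_succ_of_hasDerivWithinAt hI hu <|
      (contDiff_exp.comp (contDiff_const.mul contDiff_id)).contDiffOn.mul (by simpa using hwC1)
  refine ⟨by simpa [one_add_one_eq_two] using huC2, hpos, fun y hy => ?_, h₀, h_L⟩
  have hflux : (fun t => exp (-2 * t) * deriv u t) =ᶠ[𝓝 y] w := by
    filter_upwards [isOpen_Ioo.mem_nhds hy] with t ht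
    rw [((hu t (Ioo_subset_Icc_self ht)).hasDerivAt (Icc_mem_nhds ht.1 ht.2)).deriv,
      ← mul_assoc, ← exp_add]
    simp
  rw [hflux.deriv_eq, ((hw y (Ioo_subset_Icc_self hy)).hasDerivAt (Icc_mem_nhds hy.1 hy.2)).deriv]
  rfl

lemma IsShootingTrajectory.isSimplifiedSolution {W : ℝ} {γ : ℝ → ℝ × ℝ}
    (hγ : IsShootingTrajectory α M₂ W L γ) (hα : 0 < α) (hM₁ : 0 < M₁) (hM : M₁ < M₂)
    (hL : 0 < L) (hW₀ : 0 < W) (hW : ∀ t ∈ Icc 0 L, |(γ t).2| ≤ W) (h₀ : (γ 0).1 = M₁)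
    (h_L : (γ L).1 = M₂) : IsSimplifiedSolution α M₁ M₂ L fun t => (γ t).1 := by
  have hM₂ : 0 ≤ M₂ := by linarith
  have hpos := hγ.fst_pos hM₂ hW₀ (by linarith) (by linarith)
  have hle : ∀ t ∈ Icc 0 L, (γ t).1 ≤ M₂ := fun t ht =>
    (hγ.fst_le_max hα hM₂ t ht).trans (by rw [h₀, h_L, max_eq_right hM.le])
  refine isSimplifiedSolution_of_hasDerivWithinAt hL (w := fun t => (γ t).2)
    (fun t ht => ?_) (fun t ht => ?_) hpos h₀ h_L
  · have hw := abs_le.1 (hW t ht)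
    simpa only [min_eq_right hw.2, max_eq_right hw.1] using hγ.hasDerivWithinAt_fst t ht
  · simpa only [clampedNonlinearity.eq_of_mem ⟨(hpos t ht).le, hle t ht⟩] using
      hγ.hasDerivWithinAt_snd t ht

lemma exists_isSimplifiedSolution (hα : 0 < α) (hM₁ : 0 < M₁) (hM : M₁ < M₂) (hL : 0 < L) :
    ∃ u, IsSimplifiedSolution α M₁ M₂ L u := by
  set D := 2 * frankNonlinearity α M₂ * L
  set A := D + (M₂ - M₁) / L
  set W := A + D
  have hM₂ : 0 ≤ M₂ := by linarith
  have hD : 0 ≤ D := by have := frankNonlinearity.nonneg hα hM₂; positivity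
  have hslope : 0 < (M₂ - M₁) / L := div_pos (by linarith) hL
  obtain ⟨K, hK⟩ := shootingField.exists_lipschitzWith (α := α) (W := W) (L := L) hM₂
  choose γ hγ₀ hγ using fun s : ℝ => exists_forall_hasDerivWithinAt_Icc_of_lipschitzWith hL.le hK
    (fun x => (shootingField.continuous_time α M₂ W x).continuousOn)
    (fun t ht => shootingField.norm_le hα hM₂ (by positivity) ht) (M₁, s)
  change ∀ s, IsShootingTrajectory α M₂ W L (γ s) at hγ
  -- `w` drifts by at most `D`: shooting from `w(0) = ±A` brackets `M₂`, and the clamp at `W`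
  -- is inactive for `w(0) ∈ [-A, A]`
  have hdrift : ∀ s, ∀ t ∈ Icc 0 L, |(γ s t).2 - s| ≤ D := fun s t ht => by
    simpa [hγ₀ s] using (hγ s).abs_snd_sub_le hα hM₂ t ht
  have hshoot : Continuous fun s => (γ s L).1 :=
    (LipschitzWith.prod_fst.comp (LipschitzWith.endpoint_of_forall_hasDerivWithinAt_Icc hL.le
      (fun t ht => hK t (Ico_subset_Icc_self ht)) hγ
      (by simpa only [hγ₀] using LipschitzWith.prodMk_left M₁))).continuous
  have hlow : (γ (-A) L).1 ≤ M₂ := by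
    have := (hγ (-A)).fst_le_of_snd_nonpos (by positivity) hL.le fun t ht => by
      linarith [(abs_le.1 (hdrift (-A) t ht)).2]
    rw [hγ₀] at this
    linarith
  have hhigh : M₂ ≤ (γ A L).1 := by
    have := (hγ A).add_mul_le_fst_of_le_snd hslope.le (by linarith) hL.le fun t ht => by
      linarith [(abs_le.1 (hdrift A t ht)).1]
    rw [hγ₀, div_mul_cancel₀ _ hL.ne'] at this
    linarith
  obtain ⟨s, hs, hsM₂⟩ :=
    intermediate_value_Icc (by linarith : -A ≤ A) hshoot.continuousOn ⟨hlow, hhigh⟩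
  refine ⟨_, (hγ s).isSimplifiedSolution hα hM₁ hM hL (by positivity) (fun t ht => ?_)
    (by rw [hγ₀]) hsM₂⟩
  have := abs_le.1 (hdrift s t ht)
  exact abs_le.2 ⟨by linarith [hs.1], by linarith [hs.2]⟩

end Existence

section Uniqueness

lemma forall_le_of_flux_of_strictMonoOn {a b : ℝ} {F p q u₁ u₂ w₁ w₂ : ℝ → ℝ} {S : Set ℝ}
    (hF : StrictMonoOn F S) (hp : ∀ t ∈ Ioo a b, 0 < p t) (hq : ∀ t ∈ Ioo a b, 0 < q t)
    (hc₁ : ContinuousOn u₁ (Icc a b)) (hc₂ : ContinuousOn u₂ (Icc a b))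
    (hS₁ : ∀ t ∈ Ioo a b, u₁ t ∈ S) (hS₂ : ∀ t ∈ Ioo a b, u₂ t ∈ S)
    (hu₁ : ∀ t ∈ Ioo a b, HasDerivAt u₁ (p t * w₁ t) t)
    (hw₁ : ∀ t ∈ Ioo a b, HasDerivAt w₁ (q t * F (u₁ t)) t)
    (hu₂ : ∀ t ∈ Ioo a b, HasDerivAt u₂ (p t * w₂ t) t)
    (hw₂ : ∀ t ∈ Ioo a b, HasDerivAt w₂ (q t * F (u₂ t)) t)
    (ha : u₁ a ≤ u₂ a) (hb : u₁ b ≤ u₂ b) : ∀ t ∈ Icc a b, u₁ t ≤ u₂ t := by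
  by_contra! ⟨t, ht, hlt⟩
  set d := fun t => u₁ t - u₂ t
  set φ := fun t => w₁ t - w₂ t
  have hd : ∀ t ∈ Ioo a b, HasDerivAt d (p t * φ t) t := fun t ht =>
    ((hu₁ t ht).sub (hu₂ t ht)).congr_deriv (mul_sub _ _ _).symm
  have hφ : ∀ t ∈ Ioo a b, HasDerivAt φ (q t * (F (u₁ t) - F (u₂ t))) t := fun t ht =>
    ((hw₁ t ht).sub (hw₂ t ht)).congr_deriv (mul_sub _ _ _).symm
  obtain ⟨y, hy, hmax⟩ := isCompact_Icc.exists_isMaxOn ⟨t, ht⟩ (hc₁.sub hc₂)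
  have hdy : 0 < d y := (sub_pos.2 hlt).trans_le (hmax ht)
  have hyI : y ∈ Ioo a b := ⟨lt_of_le_of_ne hy.1 (by rintro rfl; simp only [d] at hdy; linarith),
    lt_of_le_of_ne hy.2 (by rintro rfl; simp only [d] at hdy; linarith)⟩
  have hφy : φ y = 0 := by
    have := (hmax.isLocalMax (Icc_mem_nhds hyI.1 hyI.2)).hasDerivAt_eq_zero (hd y hyI)
    exact (mul_eq_zero.1 this).resolve_left (hp y hyI).ne'
  obtain ⟨c, hyc, hsub⟩ := mem_nhdsGE_iff_exists_Icc_subset.1 <| mem_nhdsWithin_of_mem_nhds <|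
    inter_mem (isOpen_Ioo.mem_nhds hyI) ((hd y hyI).continuousAt.eventually (lt_mem_nhds hdy))
  -- on `[y, c]` we have `u₂ < u₁`, so `φ` increases from `0`, hence so does `d`: `y` is no maximum
  have hφmono : StrictMonoOn φ (Icc y c) := by
    refine strictMonoOn_of_hasDerivWithinAt_pos (convex_Icc y c)
      (fun t ht => (hφ t (hsub ht).1).continuousAt.continuousWithinAt)
      (fun t ht => (hφ t (hsub (interior_subset ht)).1).hasDerivWithinAt) fun t ht => ?_
    obtain ⟨htI, htd⟩ := hsub (interior_subset ht)
    exact mul_pos (hq t htI) (sub_pos.2 (hF (hS₂ t htI) (hS₁ t htI) (sub_pos.1 htd)))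
  have hdmono : StrictMonoOn d (Icc y c) := by
    refine strictMonoOn_of_hasDerivWithinAt_pos (convex_Icc y c)
      (fun t ht => (hd t (hsub ht).1).continuousAt.continuousWithinAt)
      (fun t ht => (hd t (hsub (interior_subset ht)).1).hasDerivWithinAt) fun t ht => ?_
    rw [interior_Icc] at ht
    refine mul_pos (hp t (hsub (Ioo_subset_Icc_self ht)).1) ?_
    rw [← hφy]
    exact hφmono (left_mem_Icc.2 hyc.le) (Ioo_subset_Icc_self ht) ht.1
  have hcI := (hsub (right_mem_Icc.2 hyc.le)).1
  exact (hdmono (left_mem_Icc.2 hyc.le) (right_mem_Icc.2 hyc.le) hyc).not_ge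
    (hmax (Ioo_subset_Icc_self hcI))

variable {α M₁ M₂ L : ℝ} {u u₁ u₂ : ℝ → ℝ}

lemma IsSimplifiedSolution.hasDerivAt_flux (hu : IsSimplifiedSolution α M₁ M₂ L u) :
    ∀ t ∈ Ioo 0 L, HasDerivAt u (exp (2 * t) * (exp (-2 * t) * deriv u t)) t ∧
      HasDerivAt (fun t => exp (-2 * t) * deriv u t)
        (2 * exp (-2 * t) * frankNonlinearity α (u t)) t := by
  obtain ⟨hC2, -, heq, -, -⟩ := hu
  intro t ht
  have hC2' := hC2.mono Ioo_subset_Icc_self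
  have hnhds := isOpen_Ioo.mem_nhds ht
  have hdu : DifferentiableAt ℝ u t :=
    (hC2'.differentiableOn (by norm_num) t ht).differentiableAt hnhds
  have hddu : DifferentiableAt ℝ (deriv u) t :=
    (((hC2'.deriv_of_isOpen isOpen_Ioo (m := 1) (by norm_num)).differentiableOn (by norm_num))
      t ht).differentiableAt hnhds
  refine ⟨?_, ?_⟩
  · rw [← mul_assoc, ← exp_add]
    simpa using hdu.hasDerivAt
  · have hw : DifferentiableAt ℝ (fun t => exp (-2 * t) * deriv u t) t :=
      (by fun_prop : DifferentiableAt ℝ (fun t : ℝ => exp (-2 * t)) t).mul hddu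
    exact hw.hasDerivAt.congr_deriv (heq t ht)

lemma IsSimplifiedSolution.le_of_isSimplifiedSolution (hα : 0 < α)
    (hu₁ : IsSimplifiedSolution α M₁ M₂ L u₁) (hu₂ : IsSimplifiedSolution α M₁ M₂ L u₂) :
    ∀ t ∈ Icc 0 L, u₁ t ≤ u₂ t :=
  forall_le_of_flux_of_strictMonoOn (frankNonlinearity.strictMonoOn hα)
    (p := fun t => exp (2 * t)) (q := fun t => 2 * exp (-2 * t))
    (fun _ _ => exp_pos _) (fun _ _ => by positivity) hu₁.1.continuousOn hu₂.1.continuousOn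
    (fun t ht => mem_Ici.2 (hu₁.2.1 t (Ioo_subset_Icc_self ht)).le)
    (fun t ht => mem_Ici.2 (hu₂.2.1 t (Ioo_subset_Icc_self ht)).le)
    (fun t ht => (hu₁.hasDerivAt_flux t ht).1) (fun t ht => (hu₁.hasDerivAt_flux t ht).2)
    (fun t ht => (hu₂.hasDerivAt_flux t ht).1) (fun t ht => (hu₂.hasDerivAt_flux t ht).2)
    (by rw [hu₁.2.2.2.1, hu₂.2.2.2.1]) (by rw [hu₁.2.2.2.2, hu₂.2.2.2.2])

end Uniqueness

/-- Existence and uniqueness for the simplified equation with `ω = 0`: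
Fix `0 < R₁ < R₂`, `L = log(R₂/R₁)`, `α > 0` and `0 < M₁ < M₂`.  Then there exists
exactly one positive C² function `u` on `I = [0, L]` satisfying the simplified
Euler–Lagrange equation on `(0, L)` with `u(0) = M₁`, `u(L) = M₂`
(uniqueness meaning any two solutions agree on `I`). -/
theorem stmt_8 (R₁ R₂ : ℝ) (hR₁ : 0 < R₁) (hR : R₁ < R₂)
    (α M₁ M₂ : ℝ) (hα : 0 < α) (hM₁ : 0 < M₁) (hM : M₁ < M₂)
    (L : ℝ) (hL : L = Real.log (R₂ / R₁)) :
    ∃ u : ℝ → ℝ, IsSimplifiedSolution α M₁ M₂ L u ∧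
      ∀ u₂ : ℝ → ℝ, IsSimplifiedSolution α M₁ M₂ L u₂ →
        Set.EqOn u₂ u (Set.Icc 0 L) := by
  have hL₀ : 0 < L := hL ▸ Real.log_pos ((one_lt_div hR₁).2 hR)
  obtain ⟨u, hu⟩ := exists_isSimplifiedSolution hα hM₁ hM hL₀
  exact ⟨u, hu, fun u₂ hu₂ t ht => le_antisymm (hu₂.le_of_isSimplifiedSolution hα hu t ht)
    (hu.le_of_isSimplifiedSolution hα hu₂ t ht)⟩
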